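/- arXiv:1212.1772 — 2 statements merged into one kernel-verified Lean document; each statement's English description precedes it below -/
import Mathlib

section
/- Let β ∈ (-1,1) and let g(t) = exp(∫₀^t (1+s)^(-β) ds) · ∫_t^∞ exp(-∫₀^τ (1+s)^(-β) ds) dτ. Then lim_{t→∞} (1+t)^(-β) g(t) = 1. -/
/-!
With `E t = exp (-∫₀ᵗ (1 + s) ^ (-β))`, the quantity is `(∫ τ in Ioi t, E τ) / F t` where
`F t = (1 + t) ^ β * E t`. Since `β < 1`, `F` tends to `0` and `-F' = E` up to the relative error
`ε t = |β| * (1 + t) ^ (β - 1) → 0` on `(t, ∞)`, so integrating `F'` over `(t, ∞)` traps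
`∫ τ in Ioi t, E τ` between `F t / (1 + ε t)` and `F t / (1 - ε t)`.
-/

open Real MeasureTheory Filter Set Topology

section IntegralComparison

variable {E F F' : ℝ → ℝ}

theorem integral_Ioi_bounds_of_hasDerivAt {t ε : ℝ} (hF : ∀ x ∈ Ici t, HasDerivAt F (F' x) x)
    (hFtop : Tendsto F atTop (𝓝 0)) (hE : ∀ τ ∈ Ioi t, 0 ≤ E τ)
    (hEm : AEStronglyMeasurable E (volume.restrict (Ioi t)))
    (hclose : ∀ τ ∈ Ioi t, |F' τ + E τ| ≤ ε * E τ) (hε : ε < 1) :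
    (1 - ε) * ∫ τ in Ioi t, E τ ≤ F t ∧ F t ≤ (1 + ε) * ∫ τ in Ioi t, E τ := by
  have hlow : ∀ τ ∈ Ioi t, (1 - ε) * E τ ≤ -F' τ := fun τ hτ => by
    linarith [(abs_le.mp (hclose τ hτ)).2]
  have hup : ∀ τ ∈ Ioi t, -F' τ ≤ (1 + ε) * E τ := fun τ hτ => by
    linarith [(abs_le.mp (hclose τ hτ)).1]
  have hF'_nonpos : ∀ τ ∈ Ioi t, F' τ ≤ 0 := fun τ hτ => by
    nlinarith [hlow τ hτ, hE τ hτ]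
  have hF'int : IntegrableOn F' (Ioi t) := integrableOn_Ioi_deriv_of_nonpos' hF hF'_nonpos hFtop
  have hFt : ∫ τ in Ioi t, -F' τ = F t := by
    rw [integral_neg, integral_Ioi_of_hasDerivAt_of_nonpos' hF hF'_nonpos hFtop, zero_sub, neg_neg]
  have hEint : IntegrableOn E (Ioi t) := by
    refine Integrable.mono' (hF'int.neg.const_mul (1 - ε)⁻¹) hEm ?_
    filter_upwards [self_mem_ae_restrict measurableSet_Ioi] with τ hτ
    rw [norm_of_nonneg (hE τ hτ), le_inv_mul_iff₀ (sub_pos.mpr hε)]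
    exact hlow τ hτ
  rw [← hFt, ← integral_const_mul, ← integral_const_mul]
  exact ⟨setIntegral_mono_on (hEint.const_mul _) hF'int.neg measurableSet_Ioi hlow,
    setIntegral_mono_on hF'int.neg (hEint.const_mul _) measurableSet_Ioi hup⟩

theorem tendsto_integral_Ioi_div_of_hasDerivAt {ε : ℝ → ℝ} (hε : Tendsto ε atTop (𝓝 0))
    (hF : ∀ᶠ x in atTop, HasDerivAt F (F' x) x) (hFtop : Tendsto F atTop (𝓝 0))
    (hFpos : ∀ᶠ t in atTop, 0 < F t) (hE : ∀ᶠ τ in atTop, 0 ≤ E τ)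
    (hEm : AEStronglyMeasurable E volume)
    (hclose : ∀ᶠ t in atTop, ∀ τ ∈ Ioi t, |F' τ + E τ| ≤ ε t * E τ) :
    Tendsto (fun t => (∫ τ in Ioi t, E τ) / F t) atTop (𝓝 1) := by
  have hlower : Tendsto (fun t => (1 + ε t)⁻¹) atTop (𝓝 1) := by
    simpa using (hε.const_add 1).inv₀ (by norm_num)
  have hupper : Tendsto (fun t => (1 - ε t)⁻¹) atTop (𝓝 1) := by
    simpa using (hε.const_sub 1).inv₀ (by norm_num)
  have hbounds : ∀ᶠ t in atTop, (1 + ε t)⁻¹ ≤ (∫ τ in Ioi t, E τ) / F t ∧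
      (∫ τ in Ioi t, E τ) / F t ≤ (1 - ε t)⁻¹ := by
    filter_upwards [hε (Ioo_mem_nhds neg_one_lt_zero one_pos), eventually_forall_ge_atTop.2 hF,
      eventually_forall_ge_atTop.2 hE, hclose, hFpos] with t ⟨hε₁, hε₂⟩ hFt hEt hcloset hFt₀
    obtain ⟨hlow, hup⟩ := integral_Ioi_bounds_of_hasDerivAt hFt hFtop
      (fun τ hτ => hEt τ hτ.out.le) hEm.restrict hcloset hε₂
    rw [le_div_iff₀ hFt₀, div_le_iff₀ hFt₀, inv_mul_le_iff₀ (by linarith),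
      le_inv_mul_iff₀ (by linarith)]
    exact ⟨hup, hlow⟩
  exact tendsto_of_tendsto_of_tendsto_of_le_of_le' hlower hupper
    (hbounds.mono fun _ h => h.1) (hbounds.mono fun _ h => h.2)

end IntegralComparison

theorem intervalIntegral_one_add_rpow_neg {β : ℝ} (hβ : β < 1) (t : ℝ) :
    ∫ s in (0:ℝ)..t, (1 + s) ^ (-β) = ((1 + t) ^ (1 - β) - 1) / (1 - β) := by
  rw [intervalIntegral.integral_comp_add_left (fun s => s ^ (-β)), add_zero,
    integral_rpow (Or.inl (by linarith)), one_rpow, neg_add_eq_sub]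

noncomputable def integratingFactor (β t : ℝ) : ℝ :=
  exp (-∫ s in (0:ℝ)..t, (1 + s) ^ (-β))

namespace integratingFactor

variable {β t : ℝ}

theorem eq_exp (hβ : β < 1) :
    integratingFactor β = fun t => exp (-(((1 + t) ^ (1 - β) - 1) / (1 - β))) := by
  funext t
  rw [integratingFactor, intervalIntegral_one_add_rpow_neg hβ]

theorem pos : 0 < integratingFactor β t := exp_pos _

theorem measurable (hβ : β < 1) : Measurable (integratingFactor β) := by
  rw [eq_exp hβ]
  fun_prop

theorem hasDerivAt (hβ : β < 1) (ht : 0 < 1 + t) :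
    HasDerivAt (integratingFactor β) (-(1 + t) ^ (-β) * integratingFactor β t) t := by
  have h := ((((hasDerivAt_id' t).const_add 1).rpow_const (p := 1 - β) (Or.inl ht.ne')).sub_const 1
    |>.div_const (1 - β)).fun_neg.exp
  rw [eq_exp hβ]
  refine h.congr_deriv ?_
  rw [sub_sub_cancel_left]
  field_simp [(sub_pos.2 hβ).ne']

theorem hasDerivAt_rpow_mul (hβ : β < 1) (ht : 0 < 1 + t) :
    HasDerivAt (fun x => (1 + x) ^ β * integratingFactor β x)
      ((β * (1 + t) ^ (β - 1) - 1) * integratingFactor β t) t := by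
  refine ((((hasDerivAt_id' t).const_add 1).rpow_const (p := β) (Or.inl ht.ne')).mul
    (hasDerivAt hβ ht)).congr_deriv ?_
  have h : (1 + t) ^ β * (1 + t) ^ (-β) = 1 := by
    rw [rpow_neg ht.le, mul_inv_cancel₀ (rpow_pos_of_pos ht β).ne']
  linear_combination (-integratingFactor β t) * h

theorem tendsto_rpow_mul (hβ : β < 1) :
    Tendsto (fun x => (1 + x) ^ β * integratingFactor β x) atTop (𝓝 0) := by
  have hc : 0 < 1 - β := sub_pos.2 hβ
  have hv : Tendsto (fun x : ℝ => (1 + x) ^ (1 - β)) atTop atTop :=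
    (tendsto_rpow_atTop hc).comp (tendsto_atTop_add_const_left _ 1 tendsto_id)
  have h := ((tendsto_rpow_mul_exp_neg_mul_atTop_nhds_zero (β / (1 - β)) _ (inv_pos.2 hc)).comp
    hv).const_mul (exp (1 - β)⁻¹)
  rw [mul_zero] at h
  refine h.congr' ?_
  filter_upwards [eventually_gt_atTop (-1)] with x hx
  have hx : 0 < 1 + x := by linarith
  rw [eq_exp hβ, Function.comp_apply, ← rpow_mul hx.le, mul_div_cancel₀ _ hc.ne', mul_left_comm,
    ← exp_add]
  congr 3
  field_simp
  ring

theorem abs_deriv_rpow_mul_add_le (hβ : β ≤ 1) (ht : 0 < 1 + t) {τ : ℝ} (hτ : t < τ) :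
    |(β * (1 + τ) ^ (β - 1) - 1) * integratingFactor β τ + integratingFactor β τ| ≤
      |β| * (1 + t) ^ (β - 1) * integratingFactor β τ := by
  rw [sub_one_mul, sub_add_cancel, abs_mul, abs_mul, abs_of_pos pos,
    abs_of_pos (rpow_pos_of_pos (by linarith) _)]
  exact mul_le_mul_of_nonneg_right (mul_le_mul_of_nonneg_left
    (rpow_le_rpow_of_nonpos ht (add_le_add_right hτ.le 1) (sub_nonpos.2 hβ)) (abs_nonneg β)) pos.le

end integratingFactor

theorem stmt_5 (β : ℝ) (hβ : β ∈ Set.Ioo (-1 : ℝ) 1)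
    (g : ℝ → ℝ)
    (hg : ∀ t : ℝ, g t = Real.exp (∫ s in (0:ℝ)..t, (1 + s) ^ (-β)) *
        ∫ τ in Set.Ioi t, Real.exp (-∫ s in (0:ℝ)..τ, (1 + s) ^ (-β))) :
    Filter.Tendsto (fun t : ℝ => (1 + t) ^ (-β) * g t) Filter.atTop (nhds 1) := by
  have hβ1 : β < 1 := hβ.2
  have hε : Tendsto (fun t => |β| * (1 + t) ^ (β - 1)) atTop (𝓝 0) := by
    simpa using ((tendsto_rpow_neg_atTop (sub_pos.2 hβ1)).comp
      (tendsto_atTop_add_const_left _ 1 tendsto_id)).const_mul |β|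
  have hlim := tendsto_integral_Ioi_div_of_hasDerivAt hε
    ((eventually_gt_atTop (-1)).mono fun t ht =>
      integratingFactor.hasDerivAt_rpow_mul hβ1 (by linarith))
    (integratingFactor.tendsto_rpow_mul hβ1)
    ((eventually_gt_atTop (-1)).mono fun t ht =>
      mul_pos (rpow_pos_of_pos (by linarith) _) integratingFactor.pos)
    (Eventually.of_forall fun _ => integratingFactor.pos.le)
    (integratingFactor.measurable hβ1).aestronglyMeasurable
    ((eventually_gt_atTop (-1)).mono fun t ht _ hτ =>
      integratingFactor.abs_deriv_rpow_mul_add_le hβ1.le (by linarith) hτ)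
  refine hlim.congr' ?_
  filter_upwards [eventually_gt_atTop (-1)] with t ht
  have hexp : exp (∫ s in (0:ℝ)..t, (1 + s) ^ (-β)) = (integratingFactor β t)⁻¹ := by
    rw [integratingFactor, exp_neg, inv_inv]
  rw [hg t, hexp, rpow_neg (by linarith), div_eq_mul_inv, mul_inv]
  unfold integratingFactor
  ring
end

section
/- Let β ∈ (-1,1) and let g be the solution of -g'(t) + (1+t)^(-β) g(t) = 1 with g(0) = B^(-1) as above. Then there exist constants c₁, c₂ > 0 such that c₁ (1+t)^β ≤ g(t) ≤ c₂ (1+t)^β for all t ≥ 0, and |g'(t)| is bounded on [0,∞). -/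
/-!
Write `Φ(t) = ∫₀ᵗ (1+s)^(-β) ds`, so that `g = e^Φ ∫ₜ^∞ e^(-Φ)`. The function
`H(t) = (1+t)^β e^(-Φ(t))` tends to `0` at infinity and satisfies
`-H' = (1 - β (1+t)^(β-1)) e^(-Φ)`, whose first factor lies in `[1 - |β|, 1 + |β|]` for `t ≥ 0`.
Integrating over `(t, ∞)` shows that `H(t)` is comparable with `∫ₜ^∞ e^(-Φ)`, that is,
`g(t)` is comparable with `e^Φ H = (1+t)^β`. The bound on `g'` then follows from the equation
`g' = (1+t)^(-β) g - 1`.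
-/

open Real MeasureTheory Set Filter Topology

section ImproperIntegral

variable {f : ℝ → ℝ} {a : ℝ}

lemma Continuous.integrableOn_Ioi_of_integrableOn_Ioi (hf : Continuous f)
    (ha : IntegrableOn f (Ioi a)) (b : ℝ) : IntegrableOn f (Ioi b) := by
  rcases le_or_gt b a with h | h
  · rw [← Ioc_union_Ioi_eq_Ioi h]
    exact hf.integrableOn_Ioc.union ha
  · exact ha.mono_set (Ioi_subset_Ioi h.le)

lemma Continuous.hasDerivAt_integral_Ioi (hf : Continuous f) (ha : IntegrableOn f (Ioi a))
    (t : ℝ) : HasDerivAt (fun x => ∫ τ in Ioi x, f τ) (-f t) t := by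
  have hsplit :
      (fun x => ∫ τ in Ioi x, f τ) = fun x => (∫ τ in Ioi a, f τ) - ∫ τ in a..x, f τ := by
    funext x
    rw [← intervalIntegral.integral_Ioi_sub_Ioi' ha (hf.integrableOn_Ioi_of_integrableOn_Ioi ha x),
      sub_sub_cancel]
  rw [hsplit]
  exact (hf.integral_hasStrictDerivAt a t).hasDerivAt.const_sub _

end ImproperIntegral

namespace OneAddRpowODE

variable {β t : ℝ}

noncomputable def Φ (β t : ℝ) : ℝ := ((1 + t) ^ (1 - β) - 1) / (1 - β)

noncomputable def H (β t : ℝ) : ℝ := (1 + t) ^ β * exp (-Φ β t)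

noncomputable def G (β t : ℝ) : ℝ := exp (Φ β t) * ∫ τ in Ioi t, exp (-Φ β τ)

lemma integral_one_add_rpow_neg (hβ : β ≠ 1) (ht : -1 < t) :
    ∫ s in (0:ℝ)..t, (1 + s) ^ (-β) = Φ β t := by
  have hβ' : -β ≠ -1 := fun h => hβ (neg_inj.mp h)
  have h0 : (0:ℝ) ∉ uIcc (1 + 0) (1 + t) := by
    rw [mem_uIcc]; rintro (⟨h, -⟩ | ⟨h, -⟩) <;> linarith
  rw [intervalIntegral.integral_comp_add_left (fun u => u ^ (-β)), integral_rpow (Or.inr ⟨hβ', h0⟩),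
    Φ, add_zero, one_rpow, neg_add_eq_sub]

lemma continuous_Φ (hβ : β < 1) : Continuous (Φ β) :=
  (((continuous_const.add continuous_id).rpow_const fun _ => Or.inr (by linarith)).sub
    continuous_const).div_const _

lemma hasDerivAt_Φ (hβ : β ≠ 1) (ht : -1 < t) : HasDerivAt (Φ β) ((1 + t) ^ (-β)) t := by
  have h := ((((hasDerivAt_id' t).const_add 1).rpow_const (p := 1 - β)
    (Or.inl (by linarith))).sub_const 1).div_const (1 - β)
  refine h.congr_deriv ?_
  rw [sub_sub_cancel_left, one_mul, mul_div_cancel_left₀ _ (sub_ne_zero.mpr hβ.symm)]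

lemma hasDerivAt_H (hβ : β ≠ 1) (ht : -1 < t) :
    HasDerivAt (H β) (-((1 - β * (1 + t) ^ (β - 1)) * exp (-Φ β t))) t := by
  have h := (((hasDerivAt_id' t).const_add 1).rpow_const (p := β) (Or.inl (by linarith))).mul
    (hasDerivAt_Φ hβ ht).neg.exp
  refine h.congr_deriv ?_
  have hinv : (1 + t) ^ β * (1 + t) ^ (-β) = 1 := by
    rw [← rpow_add (by linarith), add_neg_cancel, rpow_zero]
  linear_combination (-exp (-Φ β t)) * hinv

lemma tendsto_H_atTop (hβ : β < 1) : Tendsto (H β) atTop (𝓝 0) := by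
  have hp : 0 < 1 - β := by linarith
  have key : Tendsto (fun u : ℝ => u ^ β * exp (-(u ^ (1 - β)) / (1 - β))) atTop (𝓝 0) := by
    refine ((tendsto_rpow_mul_exp_neg_mul_atTop_nhds_zero (β / (1 - β)) (1 / (1 - β))
      (by positivity)).comp (tendsto_rpow_atTop hp)).congr' ?_
    filter_upwards [eventually_gt_atTop (0:ℝ)] with u hu
    rw [Function.comp_apply, ← rpow_mul hu.le, mul_div_cancel₀ _ hp.ne']
    ring_nf
  -- `H β t = e^(1/(1-β)) u^β e^(-u^(1-β)/(1-β))` with `u = 1 + t`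
  have h := ((key.comp (tendsto_atTop_add_const_left atTop 1 tendsto_id)).const_mul
    (exp (1 / (1 - β))))
  rw [mul_zero] at h
  refine h.congr fun τ => ?_
  simp only [Function.comp_apply, id_eq, H, Φ]
  rw [mul_left_comm, ← exp_add]
  congr 2
  ring

lemma abs_mul_one_add_rpow_sub_one_le (hβ : β ≤ 1) (ht : 0 ≤ t) :
    |β * (1 + t) ^ (β - 1)| ≤ |β| := by
  rw [abs_mul, abs_of_nonneg (rpow_nonneg (by linarith) _)]
  exact mul_le_of_le_one_right (abs_nonneg β) (rpow_le_one_of_one_le_of_nonpos (by linarith)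
    (by linarith))

lemma one_sub_abs_le_one_sub_mul_rpow (hβ : β ≤ 1) (ht : 0 ≤ t) :
    1 - |β| ≤ 1 - β * (1 + t) ^ (β - 1) := by
  linarith [le_abs_self (β * (1 + t) ^ (β - 1)), abs_mul_one_add_rpow_sub_one_le hβ ht]

lemma one_sub_mul_rpow_le_one_add_abs (hβ : β ≤ 1) (ht : 0 ≤ t) :
    1 - β * (1 + t) ^ (β - 1) ≤ 1 + |β| := by
  linarith [neg_abs_le (β * (1 + t) ^ (β - 1)), abs_mul_one_add_rpow_sub_one_le hβ ht]

lemma one_sub_mul_rpow_mul_exp_nonneg (hβ : β ≤ 1) (ht : 0 ≤ t) :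
    0 ≤ (1 - β * (1 + t) ^ (β - 1)) * exp (-Φ β t) := by
  have h0 : 0 ≤ (1 + t) ^ (β - 1) := rpow_nonneg (by linarith) _
  have h1 : (1 + t) ^ (β - 1) ≤ 1 := rpow_le_one_of_one_le_of_nonpos (by linarith) (by linarith)
  refine mul_nonneg ?_ (exp_pos _).le
  rcases le_or_gt β 0 with h | h <;> nlinarith

lemma integrableOn_Ioi_neg_deriv_H (hβ : β < 1) (ht : 0 ≤ t) :
    IntegrableOn (fun τ => (1 - β * (1 + τ) ^ (β - 1)) * exp (-Φ β τ)) (Ioi t) := by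
  have h := integrableOn_Ioi_deriv_of_nonpos'
    (fun τ hτ => hasDerivAt_H hβ.ne (by linarith [mem_Ici.mp hτ]))
    (fun τ hτ => neg_nonpos.mpr (one_sub_mul_rpow_mul_exp_nonneg hβ.le
      (ht.trans (mem_Ioi.mp hτ).le))) (tendsto_H_atTop hβ)
  exact h.fun_neg.congr_fun (fun τ _ => neg_neg _) measurableSet_Ioi

lemma integral_Ioi_neg_deriv_H (hβ : β < 1) (ht : 0 ≤ t) :
    ∫ τ in Ioi t, (1 - β * (1 + τ) ^ (β - 1)) * exp (-Φ β τ) = H β t := by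
  have h := integral_Ioi_of_hasDerivAt_of_nonpos'
    (fun τ hτ => hasDerivAt_H hβ.ne (by linarith [mem_Ici.mp hτ]))
    (fun τ hτ => neg_nonpos.mpr (one_sub_mul_rpow_mul_exp_nonneg hβ.le
      (ht.trans (mem_Ioi.mp hτ).le))) (tendsto_H_atTop hβ)
  rwa [integral_neg, zero_sub, neg_inj] at h

lemma integrableOn_Ioi_exp_neg_Φ (hβ : |β| < 1) (a : ℝ) :
    IntegrableOn (fun τ => exp (-Φ β τ)) (Ioi a) := by
  have hβ1 : β < 1 := (abs_lt.mp hβ).2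
  have hcont : Continuous fun τ => exp (-Φ β τ) := (continuous_Φ hβ1).neg.rexp
  refine hcont.integrableOn_Ioi_of_integrableOn_Ioi (a := 0) ?_ a
  refine ((integrableOn_Ioi_neg_deriv_H hβ1 le_rfl).const_mul (1 - |β|)⁻¹).mono'
    hcont.aestronglyMeasurable ?_
  filter_upwards [ae_restrict_mem measurableSet_Ioi] with τ hτ
  rw [norm_of_nonneg (exp_pos _).le, ← div_eq_inv_mul, le_div_iff₀ (by linarith), mul_comm]
  exact mul_le_mul_of_nonneg_right
    (one_sub_abs_le_one_sub_mul_rpow hβ1.le (mem_Ioi.mp hτ).le) (exp_pos _).le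

lemma one_sub_abs_mul_integral_le_H (hβ : |β| < 1) (ht : 0 ≤ t) :
    (1 - |β|) * ∫ τ in Ioi t, exp (-Φ β τ) ≤ H β t := by
  have hβ1 : β < 1 := (abs_lt.mp hβ).2
  rw [← integral_Ioi_neg_deriv_H hβ1 ht, ← integral_const_mul]
  exact setIntegral_mono_on ((integrableOn_Ioi_exp_neg_Φ hβ t).const_mul _)
    (integrableOn_Ioi_neg_deriv_H hβ1 ht) measurableSet_Ioi fun τ hτ =>
      mul_le_mul_of_nonneg_right
        (one_sub_abs_le_one_sub_mul_rpow hβ1.le (ht.trans (mem_Ioi.mp hτ).le)) (exp_pos _).le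

lemma H_le_one_add_abs_mul_integral (hβ : |β| < 1) (ht : 0 ≤ t) :
    H β t ≤ (1 + |β|) * ∫ τ in Ioi t, exp (-Φ β τ) := by
  have hβ1 : β < 1 := (abs_lt.mp hβ).2
  rw [← integral_Ioi_neg_deriv_H hβ1 ht, ← integral_const_mul]
  exact setIntegral_mono_on (integrableOn_Ioi_neg_deriv_H hβ1 ht)
    ((integrableOn_Ioi_exp_neg_Φ hβ t).const_mul _) measurableSet_Ioi fun τ hτ =>
      mul_le_mul_of_nonneg_right
        (one_sub_mul_rpow_le_one_add_abs hβ1.le (ht.trans (mem_Ioi.mp hτ).le)) (exp_pos _).le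

lemma exp_Φ_mul_H (t : ℝ) : exp (Φ β t) * H β t = (1 + t) ^ β := by
  rw [H, mul_left_comm, ← exp_add, add_neg_cancel, exp_zero, mul_one]

lemma le_G (hβ : |β| < 1) (ht : 0 ≤ t) : (1 + |β|)⁻¹ * (1 + t) ^ β ≤ G β t := by
  rw [← exp_Φ_mul_H, G, inv_mul_le_iff₀ (by positivity), mul_left_comm]
  exact mul_le_mul_of_nonneg_left (H_le_one_add_abs_mul_integral hβ ht) (exp_pos _).le

lemma G_le (hβ : |β| < 1) (ht : 0 ≤ t) : G β t ≤ (1 - |β|)⁻¹ * (1 + t) ^ β := by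
  rw [← exp_Φ_mul_H, G, le_inv_mul_iff₀ (by linarith), mul_left_comm]
  exact mul_le_mul_of_nonneg_left (one_sub_abs_mul_integral_le_H hβ ht) (exp_pos _).le

lemma hasDerivAt_G (hβ : |β| < 1) (ht : -1 < t) :
    HasDerivAt (G β) ((1 + t) ^ (-β) * G β t - 1) t := by
  have hcont : Continuous fun τ => exp (-Φ β τ) := (continuous_Φ (abs_lt.mp hβ).2).neg.rexp
  have h := (hasDerivAt_Φ (abs_lt.mp hβ).2.ne ht).exp.mul
    (hcont.hasDerivAt_integral_Ioi (integrableOn_Ioi_exp_neg_Φ hβ 0) t)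
  refine h.congr_deriv ?_
  have hinv : exp (Φ β t) * exp (-Φ β t) = 1 := by rw [← exp_add, add_neg_cancel, exp_zero]
  rw [G]
  linear_combination -hinv

lemma abs_rpow_neg_mul_G_sub_one_le (hβ : |β| < 1) (ht : 0 ≤ t) :
    |(1 + t) ^ (-β) * G β t - 1| ≤ (1 - |β|)⁻¹ := by
  have hpos : 0 < (1 + t) ^ (-β) := rpow_pos_of_pos (by linarith) _
  have hinv : (1 + t) ^ (-β) * (1 + t) ^ β = 1 := by
    rw [← rpow_add (by linarith), neg_add_cancel, rpow_zero]
  have hupper : (1 + t) ^ (-β) * G β t ≤ (1 - |β|)⁻¹ := by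
    calc (1 + t) ^ (-β) * G β t ≤ (1 + t) ^ (-β) * ((1 - |β|)⁻¹ * (1 + t) ^ β) :=
          mul_le_mul_of_nonneg_left (G_le hβ ht) hpos.le
      _ = (1 - |β|)⁻¹ := by linear_combination (1 - |β|)⁻¹ * hinv
  have hlower : 0 ≤ (1 + t) ^ (-β) * G β t :=
    mul_nonneg hpos.le ((by positivity : (0:ℝ) ≤ (1 + |β|)⁻¹ * (1 + t) ^ β).trans (le_G hβ ht))
  have hone : 1 ≤ (1 - |β|)⁻¹ := one_le_inv₀ (by linarith) |>.mpr (by linarith [abs_nonneg β])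
  rw [abs_le]
  constructor <;> linarith

end OneAddRpowODE

open OneAddRpowODE

theorem stmt_6 (β : ℝ) (hβ : β ∈ Set.Ioo (-1 : ℝ) 1)
    (g : ℝ → ℝ)
    (hg : ∀ t : ℝ, g t = Real.exp (∫ s in (0:ℝ)..t, (1 + s) ^ (-β)) *
        ∫ τ in Set.Ioi t, Real.exp (-∫ s in (0:ℝ)..τ, (1 + s) ^ (-β))) :
    (∃ c₁ > (0:ℝ), ∃ c₂ > (0:ℝ), ∀ t : ℝ, 0 ≤ t →
        c₁ * (1 + t) ^ β ≤ g t ∧ g t ≤ c₂ * (1 + t) ^ β) ∧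
    ∃ M : ℝ, ∀ t : ℝ, 0 ≤ t → |deriv g t| ≤ M := by
  have hβ' : |β| < 1 := abs_lt.mpr hβ
  have hg_eq_G : ∀ t, -1 < t → g t = G β t := fun t ht => by
    rw [hg, G, integral_one_add_rpow_neg hβ.2.ne ht]
    congr 1
    exact setIntegral_congr_fun measurableSet_Ioi fun τ hτ => by
      rw [integral_one_add_rpow_neg hβ.2.ne (ht.trans (mem_Ioi.mp hτ))]
  have hderiv : ∀ t, 0 ≤ t → deriv g t = (1 + t) ^ (-β) * G β t - 1 := fun t ht =>
    ((hasDerivAt_G hβ' (by linarith)).congr_of_eventuallyEq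
      ((eventually_gt_nhds (by linarith : -1 < t)).mono hg_eq_G)).deriv
  refine ⟨⟨(1 + |β|)⁻¹, by positivity, (1 - |β|)⁻¹, inv_pos.mpr (by linarith), fun t ht => ?_⟩,
    (1 - |β|)⁻¹, fun t ht => ?_⟩
  · rw [hg_eq_G t (by linarith)]
    exact ⟨le_G hβ' ht, G_le hβ' ht⟩
  · rw [hderiv t ht]
    exact abs_rpow_neg_mul_G_sub_one_le hβ' ht
end
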